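/- Let Z be a proper geodesic δ-hyperbolic space, x ∈ Z, and let σ₁, σ₂: [0,∞) → Z be geodesic rays from x with distinct endpoints at infinity. Then for any point w ∈ Z lying on a bi-infinite geodesic between σ₁(∞) and σ₂(∞), one has ⟨σ₁(∞), σ₂(∞)⟩_x − 42δ ≤ (β_{σ₁}(x,w) + β_{σ₂}(x,w))/2 ≤ ⟨σ₁(∞), σ₂(∞)⟩_x. -/

import Mathlib

open Filter Metric Set

noncomputable def gromovProd {Z : Type*} [MetricSpace Z] (x y z : Z) : ℝ :=
  (dist x y + dist x z - dist y z) / 2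

/-- `Z` is δ-hyperbolic in the Gromov product sense. -/
def IsDeltaHyperbolic (Z : Type*) [MetricSpace Z] (δ : ℝ) : Prop :=
  ∀ w x y z : Z, min (gromovProd x w y) (gromovProd x y z) - δ ≤ gromovProd x w z

/-- `f` parametrizes a geodesic segment from `x` to `y` by arclength on `[0, dist x y]`. -/
def IsGeodesicSegment {Z : Type*} [MetricSpace Z] (f : ℝ → Z) (x y : Z) : Prop :=
  f 0 = x ∧ f (dist x y) = y ∧
    ∀ s ∈ Set.Icc (0:ℝ) (dist x y), ∀ t ∈ Set.Icc (0:ℝ) (dist x y),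
      dist (f s) (f t) = |s - t|

/-- `Z` is a geodesic metric space. -/
def IsGeodesicSpace (Z : Type*) [MetricSpace Z] : Prop :=
  ∀ x y : Z, ∃ f : ℝ → Z, IsGeodesicSegment f x y

/-- The image of the geodesic segment `[x,y]` parametrized by `f`. -/
def segImage {Z : Type*} [MetricSpace Z] (f : ℝ → Z) (x y : Z) : Set Z :=
  f '' Set.Icc 0 (dist x y)

/-- A geodesic ray: an isometric embedding of `[0,∞)`. -/
def IsGeodesicRay {Z : Type*} [MetricSpace Z] (σ : ℝ → Z) : Prop :=
  ∀ s t : ℝ, 0 ≤ s → 0 ≤ t → dist (σ s) (σ t) = |s - t|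

/-- A bi-infinite geodesic: an isometric embedding of `ℝ`. -/
def IsBiInfGeodesic {Z : Type*} [MetricSpace Z] (γ : ℝ → Z) : Prop :=
  ∀ s t : ℝ, dist (γ s) (γ t) = |s - t|

/-- Two geodesic rays are asymptotic (same endpoint at infinity):
their images are at finite Hausdorff distance. -/
def AsymptoticRays {Z : Type*} [MetricSpace Z] (σ σ' : ℝ → Z) : Prop :=
  EMetric.hausdorffEdist (σ '' Set.Ici 0) (σ' '' Set.Ici 0) ≠ ⊤

/-- Extended Gromov product (with respect to `x`) of the two boundary points
represented by the geodesic rays `σ`, `σ'`. -/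
noncomputable def extGP {Z : Type*} [MetricSpace Z] (x : Z) (σ σ' : ℝ → Z) : EReal :=
  Filter.liminf (fun p : ℝ × ℝ => ((gromovProd x (σ p.1) (σ' p.2) : ℝ) : EReal))
    (Filter.atTop ×ˢ Filter.atTop)

/-- Extended Gromov product (with respect to `x`) of a point `y ∈ Z` and the boundary
point represented by the geodesic ray `σ`. -/
noncomputable def ptRayGP {Z : Type*} [MetricSpace Z] (x y : Z) (σ : ℝ → Z) : EReal :=
  Filter.liminf (fun t : ℝ => ((gromovProd x y (σ t) : ℝ) : EReal)) Filter.atTop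

/-- The visual quasi-metric `d_x(ξ,η) = exp(-2⟨ξ,η⟩_x)` on the Gromov boundary,
for boundary points represented by geodesic rays. -/
noncomputable def visDist {Z : Type*} [MetricSpace Z] (x : Z) (σ σ' : ℝ → Z) : ℝ :=
  if extGP x σ σ' = ⊤ then 0 else Real.exp (-2 * (extGP x σ σ').toReal)

/-
Base the Gromov products at `w` instead: `⟨y,z⟩_x - ⟨y,z⟩_w` equals the average of the two
Busemann-type differences `d(x,·) - d(w,·)` at `y` and `z`, so it suffices to show that
`0 ≤ ⟨σ₁ s, σ₂ t⟩_w ≤ 2δ` for large `s, t`. Non-negativity is the triangle inequality. For the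
upper bound, `σ₁ s` and `σ₂ t` lie within bounded distance of points `p = γ(-u)`, `q = γ v` of
`γ` far from `w` on either side; then `⟨p,q⟩_w = 0`, while `⟨p,σ₁ s⟩_w` and `⟨q,σ₂ t⟩_w` are
large, and two applications of the four-point condition give `⟨σ₁ s, σ₂ t⟩_w ≤ 2δ`. This yields
the lower bound with `2δ` in place of `42δ`.
-/

section GromovProduct

variable {Z : Type*} [MetricSpace Z]

theorem gromovProd_comm (x y z : Z) : gromovProd x y z = gromovProd x z y := by
  simp only [gromovProd, dist_comm y z, add_comm]

theorem gromovProd_nonneg (x y z : Z) : 0 ≤ gromovProd x y z := by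
  unfold gromovProd
  linarith [dist_triangle_left y z x]

theorem dist_sub_dist_le_gromovProd (w p y : Z) : dist w p - dist p y ≤ gromovProd w p y := by
  unfold gromovProd
  linarith [dist_triangle_right w p y]

theorem gromovProd_sub_gromovProd (x w y z : Z) :
    gromovProd x y z - gromovProd w y z =
      ((dist x y - dist w y) + (dist x z - dist w z)) / 2 := by
  unfold gromovProd
  ring

theorem IsDeltaHyperbolic.nonneg {δ : ℝ} (hhyp : IsDeltaHyperbolic Z δ) (x : Z) : 0 ≤ δ := by
  have h := hhyp x x x x
  simp only [gromovProd, dist_self, add_zero, sub_zero, zero_div, min_self] at h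
  linarith

theorem IsDeltaHyperbolic.gromovProd_le_of_gromovProd_nonpos {δ : ℝ}
    (hhyp : IsDeltaHyperbolic Z δ) {w p q y z : Z} (hpq : gromovProd w p q ≤ 0)
    (hpy : δ < gromovProd w p y) (hqz : 2 * δ < gromovProd w q z) :
    gromovProd w y z ≤ 2 * δ := by
  have hyq : gromovProd w y q ≤ δ := by
    have h := hhyp p w y q
    rcases min_le_iff.mp (show min _ _ ≤ δ by linarith) with h' | h' <;> linarith
  have h := hhyp y w z q
  rw [gromovProd_comm w z q] at h
  rcases min_le_iff.mp (show min _ _ ≤ 2 * δ by linarith) with h' | h' <;> linarith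

end GromovProduct

section Geodesics

variable {Z : Type*} [MetricSpace Z]

theorem IsGeodesicRay.sub_dist_le {σ : ℝ → Z} (hσ : IsGeodesicRay σ) (w : Z) {s : ℝ}
    (hs : 0 ≤ s) : s - dist w (σ 0) ≤ dist w (σ s) := by
  have h := hσ 0 s le_rfl hs
  rw [zero_sub, abs_neg, abs_of_nonneg hs] at h
  linarith [dist_triangle_left (σ 0) (σ s) w]

theorem IsBiInfGeodesic.comp_neg {γ : ℝ → Z} (hγ : IsBiInfGeodesic γ) :
    IsBiInfGeodesic fun t => γ (-t) := by
  intro s t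
  rw [hγ, neg_sub_neg, abs_sub_comm]

theorem IsBiInfGeodesic.gromovProd_eq_zero {γ : ℝ → Z} (hγ : IsBiInfGeodesic γ) {s a t : ℝ}
    (hs : s ≤ a) (ht : a ≤ t) : gromovProd (γ a) (γ s) (γ t) = 0 := by
  rw [gromovProd, hγ, hγ, hγ, abs_of_nonneg (sub_nonneg.2 hs), abs_of_nonpos (sub_nonpos.2 ht),
    abs_of_nonpos (sub_nonpos.2 (hs.trans ht))]
  ring

theorem AsymptoticRays.exists_dist_le {σ σ' : ℝ → Z} (h : AsymptoticRays σ σ') :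
    ∃ H, 0 ≤ H ∧ ∀ s, 0 ≤ s → ∃ u, 0 ≤ u ∧ dist (σ u) (σ' s) ≤ H := by
  refine ⟨hausdorffDist (σ '' Ici 0) (σ' '' Ici 0) + 1,
    add_nonneg hausdorffDist_nonneg zero_le_one, fun s hs => ?_⟩
  obtain ⟨_, ⟨u, hu, rfl⟩, hdist⟩ :=
    exists_dist_lt_of_hausdorffDist_lt' (mem_image_of_mem σ' hs) (lt_add_one _) h
  exact ⟨u, hu, hdist.le⟩

theorem IsBiInfGeodesic.eventually_exists_ge_lt_gromovProd {γ σ : ℝ → Z}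
    (hγ : IsBiInfGeodesic γ) (hσ : IsGeodesicRay σ) (hasym : AsymptoticRays γ σ) (a C : ℝ) :
    ∀ᶠ s in atTop, ∃ v, a ≤ v ∧ C < gromovProd (γ a) (γ v) (σ s) := by
  obtain ⟨H, hH, hnear⟩ := hasym.exists_dist_le
  filter_upwards [eventually_gt_atTop (dist (γ a) (σ 0) + 2 * H + |a| + |C|)] with s hs
  have hs0 : 0 ≤ s := by
    linarith [dist_nonneg (x := γ a) (y := σ 0), abs_nonneg a, abs_nonneg C]
  obtain ⟨v, hv, hvs⟩ := hnear s hs0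
  have hfar : H + |a| + |C| < |a - v| := by
    have := dist_triangle (γ a) (γ v) (σ s)
    rw [hγ] at this
    linarith [hσ.sub_dist_le (γ a) hs0]
  refine ⟨v, ?_, ?_⟩
  · by_contra! hva
    rw [abs_of_pos (sub_pos.2 hva)] at hfar
    linarith [le_abs_self a, abs_nonneg C]
  · calc C < dist (γ a) (γ v) - dist (γ v) (σ s) := by
          rw [hγ]
          linarith [le_abs_self C, abs_nonneg a]
      _ ≤ gromovProd (γ a) (γ v) (σ s) := dist_sub_dist_le_gromovProd _ _ _

theorem IsDeltaHyperbolic.eventually_gromovProd_le {δ : ℝ} (hhyp : IsDeltaHyperbolic Z δ)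
    {γ σ₁ σ₂ : ℝ → Z} (hγ : IsBiInfGeodesic γ) (h1 : IsGeodesicRay σ₁)
    (h2 : IsGeodesicRay σ₂) (hneg : AsymptoticRays (fun t => γ (-t)) σ₁)
    (hpos : AsymptoticRays γ σ₂) (a : ℝ) :
    ∀ᶠ p : ℝ × ℝ in atTop ×ˢ atTop, gromovProd (γ a) (σ₁ p.1) (σ₂ p.2) ≤ 2 * δ := by
  have hfar₁ := hγ.comp_neg.eventually_exists_ge_lt_gromovProd h1 hneg (-a) δ
  have hfar₂ := hγ.eventually_exists_ge_lt_gromovProd h2 hpos a (2 * δ)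
  filter_upwards [hfar₁.prod_mk hfar₂] with p ⟨⟨u, hu, hpy⟩, ⟨v, hv, hqz⟩⟩
  simp only [neg_neg] at hpy
  exact hhyp.gromovProd_le_of_gromovProd_nonpos
    (hγ.gromovProd_eq_zero (neg_le.1 hu) hv).le hpy hqz

end Geodesics

theorem stmt14_general {Z : Type*} [MetricSpace Z] {δ : ℝ}
    (hhyp : IsDeltaHyperbolic Z δ) (x : Z)
    (σ₁ σ₂ : ℝ → Z) (h1 : IsGeodesicRay σ₁) (h2 : IsGeodesicRay σ₂)
    (γ : ℝ → Z) (hγ : IsBiInfGeodesic γ)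
    (hneg : AsymptoticRays (fun t => γ (-t)) σ₁)
    (hpos : AsymptoticRays (fun t => γ t) σ₂)
    (w : Z) (hw : w ∈ Set.range γ)
    (b₁ b₂ : ℝ)
    (hb₁ : Filter.Tendsto (fun t => dist x (σ₁ t) - dist w (σ₁ t)) Filter.atTop (nhds b₁))
    (hb₂ : Filter.Tendsto (fun t => dist x (σ₂ t) - dist w (σ₂ t)) Filter.atTop (nhds b₂)) :
    extGP x σ₁ σ₂ - ((42 * δ : ℝ) : EReal) ≤ (((b₁ + b₂) / 2 : ℝ) : EReal) ∧
      (((b₁ + b₂) / 2 : ℝ) : EReal) ≤ extGP x σ₁ σ₂ := by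
  obtain ⟨a, rfl⟩ := hw
  set B : ℝ × ℝ → ℝ := fun p =>
    ((dist x (σ₁ p.1) - dist (γ a) (σ₁ p.1)) + (dist x (σ₂ p.2) - dist (γ a) (σ₂ p.2))) / 2
  have hB : Tendsto B (atTop ×ˢ atTop) (nhds ((b₁ + b₂) / 2)) :=
    ((hb₁.comp tendsto_fst).add (hb₂.comp tendsto_snd)).div_const 2
  have hsplit : ∀ p : ℝ × ℝ,
      gromovProd x (σ₁ p.1) (σ₂ p.2) = B p + gromovProd (γ a) (σ₁ p.1) (σ₂ p.2) := fun p => by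
    simp only [B]
    linarith [gromovProd_sub_gromovProd x (γ a) (σ₁ p.1) (σ₂ p.2)]
  have hlow : (((b₁ + b₂) / 2 : ℝ) : EReal) ≤ extGP x σ₁ σ₂ := by
    rw [← (EReal.tendsto_coe.2 hB).liminf_eq]
    refine liminf_le_liminf (Eventually.of_forall fun p => EReal.coe_le_coe_iff.2 ?_)
    linarith [hsplit p, gromovProd_nonneg (γ a) (σ₁ p.1) (σ₂ p.2)]
  have hup : extGP x σ₁ σ₂ ≤ (((b₁ + b₂) / 2 + 2 * δ : ℝ) : EReal) := by
    rw [← (EReal.tendsto_coe.2 (hB.add_const (2 * δ))).liminf_eq]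
    refine liminf_le_liminf ((hhyp.eventually_gromovProd_le hγ h1 h2 hneg hpos a).mono
      fun p hp => EReal.coe_le_coe_iff.2 ?_)
    linarith [hsplit p]
  refine ⟨?_, hlow⟩
  calc extGP x σ₁ σ₂ - ((42 * δ : ℝ) : EReal)
      ≤ (((b₁ + b₂) / 2 + 2 * δ : ℝ) : EReal) - ((42 * δ : ℝ) : EReal) :=
        EReal.sub_le_sub hup le_rfl
    _ = (((b₁ + b₂) / 2 + 2 * δ - 42 * δ : ℝ) : EReal) := (EReal.coe_sub _ _).symm
    _ ≤ (((b₁ + b₂) / 2 : ℝ) : EReal) :=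
        EReal.coe_le_coe_iff.2 (by linarith [hhyp.nonneg x])

/-- For geodesic rays `σ₁, σ₂` from `x` with distinct endpoints at infinity and a point
`w` on a bi-infinite geodesic between the endpoints,
`⟨σ₁(∞),σ₂(∞)⟩ₓ − 42δ ≤ (β_{σ₁}(x,w) + β_{σ₂}(x,w))/2 ≤ ⟨σ₁(∞),σ₂(∞)⟩ₓ`. -/
theorem stmt14 {Z : Type*} [MetricSpace Z] [ProperSpace Z] {δ : ℝ}
    (hgeo : IsGeodesicSpace Z) (hhyp : IsDeltaHyperbolic Z δ) (x : Z)
    (σ₁ σ₂ : ℝ → Z) (h1 : IsGeodesicRay σ₁) (h2 : IsGeodesicRay σ₂)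
    (h10 : σ₁ 0 = x) (h20 : σ₂ 0 = x)
    (hne : extGP x σ₁ σ₂ ≠ ⊤)
    (γ : ℝ → Z) (hγ : IsBiInfGeodesic γ)
    (hneg : AsymptoticRays (fun t => γ (-t)) σ₁)
    (hpos : AsymptoticRays (fun t => γ t) σ₂)
    (w : Z) (hw : w ∈ Set.range γ)
    (b₁ b₂ : ℝ)
    (hb₁ : Filter.Tendsto (fun t => dist x (σ₁ t) - dist w (σ₁ t)) Filter.atTop (nhds b₁))
    (hb₂ : Filter.Tendsto (fun t => dist x (σ₂ t) - dist w (σ₂ t)) Filter.atTop (nhds b₂)) :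
    extGP x σ₁ σ₂ - ((42 * δ : ℝ) : EReal) ≤ (((b₁ + b₂) / 2 : ℝ) : EReal) ∧
      (((b₁ + b₂) / 2 : ℝ) : EReal) ≤ extGP x σ₁ σ₂ :=
  stmt14_general hhyp x σ₁ σ₂ h1 h2 γ hγ hneg hpos w hw b₁ b₂ hb₁ hb₂
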